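/- arXiv:2506.17762 — 2 statements merged into one kernel-verified Lean document; each statement's English description precedes it below -/
import Mathlib

section
/- Let X and Y be Banach spaces and let L be a locally compact Hausdorff space. If the pair (X, C_0(L,Y)) has the Bishop-Phelps-Bollobás property for operators, then the pair (X,Y) has the Bishop-Phelps-Bollobás property for operators. -/
open ZeroAtInfty

/-- The Bishop-Phelps-Bollobás property for the pair of Banach spaces `(X, Y)`. -/
def BPBp (𝕜 X Y : Type*) [RCLike 𝕜] [NormedAddCommGroup X] [NormedSpace 𝕜 X]
    [NormedAddCommGroup Y] [NormedSpace 𝕜 Y] : Prop :=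
  ∀ ε > (0 : ℝ), ∃ η > (0 : ℝ),
    ∀ (T : X →L[𝕜] Y) (x₀ : X), ‖T‖ = 1 → ‖x₀‖ = 1 → ‖T x₀‖ > 1 - η →
      ∃ (S : X →L[𝕜] Y) (u₀ : X),
        ‖S‖ = 1 ∧ ‖u₀‖ = 1 ∧ ‖S u₀‖ = 1 ∧ ‖u₀ - x₀‖ < ε ∧ ‖S - T‖ < ε

open Filter Topology

namespace BPBaux

variable {𝕜 Y L : Type*} [RCLike 𝕜] [NormedAddCommGroup Y] [NormedSpace 𝕜 Y]
  [TopologicalSpace L]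

/-- Pointwise norm bound for `C₀` functions. -/
theorem norm_apply_le (f : C₀(L, Y)) (t : L) : ‖f t‖ ≤ ‖f‖ := by
  rw [← ZeroAtInftyContinuousMap.norm_toBCF_eq_norm]
  exact BoundedContinuousFunction.norm_coe_le_norm f.toBCF t

theorem norm_le_of_forall {f : C₀(L, Y)} {C : ℝ} (hC : 0 ≤ C) (h : ∀ t, ‖f t‖ ≤ C) :
    ‖f‖ ≤ C := by
  rw [← ZeroAtInftyContinuousMap.norm_toBCF_eq_norm]
  exact (BoundedContinuousFunction.norm_le hC).2 h

/-- Evaluation at a point as a continuous linear map. -/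
noncomputable def evalCLM (𝕜 : Type*) [RCLike 𝕜] [NormedSpace 𝕜 Y] (t : L) :
    C₀(L, Y) →L[𝕜] Y :=
  LinearMap.mkContinuous
    { toFun := fun f => f t
      map_add' := fun _ _ => rfl
      map_smul' := fun _ _ => rfl } 1
    (fun f => by simpa using norm_apply_le f t)

@[simp] theorem evalCLM_apply (t : L) (f : C₀(L, Y)) : evalCLM 𝕜 t f = f t := rfl

/-- Multiplying a vector by a compactly-supported-type scalar function gives a `C₀` function. -/
noncomputable def embFun (φ : C(L, ℝ)) (hφ : Tendsto (φ : L → ℝ) (cocompact L) (𝓝 0))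
    (y : Y) : C₀(L, Y) where
  toFun := fun t => ((φ t : ℝ) : 𝕜) • y
  continuous_toFun := ((RCLike.continuous_ofReal.comp φ.continuous).smul continuous_const)
  zero_at_infty' := by
    have h1 : Tendsto (fun t => ((φ t : ℝ) : 𝕜)) (cocompact L) (𝓝 ((0 : ℝ) : 𝕜)) :=
      (RCLike.continuous_ofReal.tendsto _).comp hφ
    have := h1.smul_const y
    simpa using this

@[simp] theorem embFun_apply (φ : C(L, ℝ)) (hφ : Tendsto (φ : L → ℝ) (cocompact L) (𝓝 0))
    (y : Y) (t : L) : (embFun (𝕜 := 𝕜) φ hφ y) t = ((φ t : ℝ) : 𝕜) • y := rfl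

theorem norm_embFun_apply_le (φ : C(L, ℝ)) (hφ : Tendsto (φ : L → ℝ) (cocompact L) (𝓝 0))
    (hicc : ∀ t, φ t ∈ Set.Icc (0 : ℝ) 1) (y : Y) :
    ‖embFun (𝕜 := 𝕜) φ hφ y‖ ≤ ‖y‖ := by
  refine norm_le_of_forall (norm_nonneg y) fun t => ?_
  rw [embFun_apply, norm_smul, RCLike.norm_ofReal]
  have h := hicc t
  calc |φ t| * ‖y‖ ≤ 1 * ‖y‖ := by
        apply mul_le_mul_of_nonneg_right _ (norm_nonneg y)
        rw [abs_le]; exact ⟨by linarith [h.1], h.2⟩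
    _ = ‖y‖ := one_mul _

theorem norm_embFun (φ : C(L, ℝ)) (hφ : Tendsto (φ : L → ℝ) (cocompact L) (𝓝 0))
    (hicc : ∀ t, φ t ∈ Set.Icc (0 : ℝ) 1) {t₀ : L} (ht₀ : φ t₀ = 1) (y : Y) :
    ‖embFun (𝕜 := 𝕜) φ hφ y‖ = ‖y‖ := by
  refine le_antisymm (norm_embFun_apply_le φ hφ hicc y) ?_
  have := norm_apply_le (embFun (𝕜 := 𝕜) φ hφ y) t₀
  rw [embFun_apply, ht₀] at this
  simpa using this

/-- The embedding `Y →L C₀(L, Y)` given by multiplication with a bump function. -/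
noncomputable def emb (φ : C(L, ℝ)) (hφ : Tendsto (φ : L → ℝ) (cocompact L) (𝓝 0))
    (hicc : ∀ t, φ t ∈ Set.Icc (0 : ℝ) 1) : Y →L[𝕜] C₀(L, Y) :=
  LinearMap.mkContinuous
    { toFun := fun y => embFun (𝕜 := 𝕜) φ hφ y
      map_add' := fun y z => by
        ext t; simp [smul_add]
      map_smul' := fun c y => by
        ext t
        show ((φ t : ℝ) : 𝕜) • (c • y) = c • (((φ t : ℝ) : 𝕜) • y)
        exact smul_comm _ _ _ }
    1 (fun y => by simpa using norm_embFun_apply_le (𝕜 := 𝕜) φ hφ hicc y)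

@[simp] theorem emb_apply (φ : C(L, ℝ)) (hφ : Tendsto (φ : L → ℝ) (cocompact L) (𝓝 0))
    (hicc : ∀ t, φ t ∈ Set.Icc (0 : ℝ) 1) (y : Y) (t : L) :
    (emb (𝕜 := 𝕜) φ hφ hicc y) t = ((φ t : ℝ) : 𝕜) • y := rfl

/-- A `C₀` function of norm 1 attains its norm. -/
theorem exists_norm_apply_eq_one [Nonempty L] (f : C₀(L, Y)) (hf : ‖f‖ = 1) :
    ∃ t, ‖f t‖ = 1 := by
  have hz : Tendsto (fun t => f t) (cocompact L) (𝓝 0) := f.zero_at_infty'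
  have hev : ∀ᶠ t in cocompact L, ‖f t‖ < 1 / 2 := by
    have := Metric.tendsto_nhds.mp hz (1 / 2) (by norm_num)
    simpa [dist_eq_norm] using this
  obtain ⟨K, hK, hKsub⟩ := mem_cocompact.mp hev
  obtain t₀ := Classical.arbitrary L
  have hK' : IsCompact (K ∪ {t₀}) := hK.union isCompact_singleton
  have hne : (K ∪ {t₀}).Nonempty := ⟨t₀, Or.inr rfl⟩
  obtain ⟨t₁, ht₁mem, ht₁max⟩ :=
    hK'.exists_isMaxOn hne (Continuous.continuousOn (by continuity : Continuous fun t => ‖f t‖))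
  have hle : ∀ t, ‖f t‖ ≤ max ‖f t₁‖ (1 / 2) := by
    intro t
    by_cases ht : t ∈ K ∪ {t₀}
    · exact le_max_of_le_left (ht₁max ht)
    · have : t ∈ Kᶜ := fun hm => ht (Or.inl hm)
      exact le_max_of_le_right (le_of_lt (hKsub this))
  have hub : ‖f‖ ≤ max ‖f t₁‖ (1 / 2) :=
    norm_le_of_forall (le_max_of_le_right (by norm_num)) hle
  rw [hf] at hub
  have h1 : (1 : ℝ) ≤ ‖f t₁‖ := by
    rcases le_max_iff.mp hub with h | h
    · exact h
    · linarith
  exact ⟨t₁, le_antisymm (hf ▸ norm_apply_le f t₁) h1⟩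

end BPBaux

theorem bpbp_of_bpbp_C0 (𝕜 X Y L : Type*) [RCLike 𝕜]
    [NormedAddCommGroup X] [NormedSpace 𝕜 X] [CompleteSpace X]
    [NormedAddCommGroup Y] [NormedSpace 𝕜 Y] [CompleteSpace Y]
    [TopologicalSpace L] [LocallyCompactSpace L] [T2Space L] [Nonempty L]
    (h : BPBp 𝕜 X C₀(L, Y)) : BPBp 𝕜 X Y := by
  intro ε hε
  obtain ⟨η, hη, H⟩ := h (ε / 2) (by linarith)
  refine ⟨η, hη, ?_⟩
  intro T x₀ hT hx₀ hTx₀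
  obtain t₀ := Classical.arbitrary L
  obtain ⟨φ, hφ1, -, hφcs, hφicc⟩ :=
    exists_continuous_one_zero_of_isCompact (isCompact_singleton (x := t₀))
      isClosed_empty (Set.disjoint_empty _)
  have hφt₀ : φ t₀ = 1 := hφ1 rfl
  have hφtend : Filter.Tendsto (φ : L → ℝ) (Filter.cocompact L) (𝓝 0) :=
    hφcs.is_zero_at_infty
  set J : Y →L[𝕜] C₀(L, Y) := BPBaux.emb φ hφtend hφicc with hJ
  have hJnorm : ∀ y, ‖J y‖ = ‖y‖ := fun y =>
    BPBaux.norm_embFun φ hφtend hφicc hφt₀ y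
  set Tt : X →L[𝕜] C₀(L, Y) := J.comp T with hTtdef
  have hTtapply : ∀ x, ‖Tt x‖ = ‖T x‖ := fun x => hJnorm (T x)
  have hTt : ‖Tt‖ = 1 := by
    refine le_antisymm ?_ ?_
    · refine ContinuousLinearMap.opNorm_le_bound _ (by norm_num) fun x => ?_
      rw [hTtapply, one_mul]
      have := T.le_opNorm x
      rwa [hT, one_mul] at this
    · rw [← hT]
      refine ContinuousLinearMap.opNorm_le_bound _ (norm_nonneg Tt) fun x => ?_
      rw [← hTtapply]
      exact Tt.le_opNorm x
  have hTtx₀ : ‖Tt x₀‖ > 1 - η := by rw [hTtapply]; exact hTx₀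
  obtain ⟨St, u₀, hSt, hu₀, hStu₀, hclu, hclS⟩ := H Tt x₀ hTt hx₀ hTtx₀
  obtain ⟨t₁, ht₁⟩ := BPBaux.exists_norm_apply_eq_one (St u₀) hStu₀
  set D : ℝ := ‖St - Tt‖ with hD
  have hDlt : D < ε / 2 := hclS
  have hDnn : 0 ≤ D := norm_nonneg _
  -- the approximating operator: evaluate `St` at `t₁`
  set S : X →L[𝕜] Y := (BPBaux.evalCLM 𝕜 t₁).comp St with hSdef
  have hSapply : ∀ x, S x = St x t₁ := fun x => rfl
  have hSle : ‖S‖ ≤ 1 := by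
    refine ContinuousLinearMap.opNorm_le_bound _ (by norm_num) fun x => ?_
    rw [hSapply, one_mul]
    calc ‖St x t₁‖ ≤ ‖St x‖ := BPBaux.norm_apply_le _ _
      _ ≤ ‖St‖ * ‖x‖ := St.le_opNorm x
      _ = ‖x‖ := by rw [hSt, one_mul]
  have hSu₀ : ‖S u₀‖ = 1 := ht₁
  have hSnorm : ‖S‖ = 1 := by
    refine le_antisymm hSle ?_
    have := S.le_opNorm u₀
    rw [hSu₀, hu₀, mul_one] at this
    exact this
  -- pointwise difference bound
  have hdiff : ∀ x, ‖St x t₁ - Tt x t₁‖ ≤ D * ‖x‖ := by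
    intro x
    calc ‖St x t₁ - Tt x t₁‖ = ‖((St - Tt) x) t₁‖ := by
          simp [ContinuousLinearMap.sub_apply]
      _ ≤ ‖(St - Tt) x‖ := BPBaux.norm_apply_le _ _
      _ ≤ D * ‖x‖ := (St - Tt).le_opNorm x
  -- φ t₁ is close to 1
  have hTu₀le : ‖T u₀‖ ≤ 1 := by
    have := T.le_opNorm u₀
    rwa [hT, hu₀, one_mul] at this
  have hφt₁ : 1 - φ t₁ ≤ D := by
    have h1 : ‖Tt u₀ t₁‖ = |φ t₁| * ‖T u₀‖ := by
      have : Tt u₀ t₁ = ((φ t₁ : ℝ) : 𝕜) • T u₀ := rfl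
      rw [this, norm_smul, RCLike.norm_ofReal]
    have h2 : ‖Tt u₀ t₁‖ ≤ φ t₁ := by
      rw [h1, abs_of_nonneg (hφicc t₁).1]
      calc φ t₁ * ‖T u₀‖ ≤ φ t₁ * 1 :=
            mul_le_mul_of_nonneg_left hTu₀le (hφicc t₁).1
        _ = φ t₁ := mul_one _
    have h3 : ‖St u₀ t₁‖ - ‖Tt u₀ t₁‖ ≤ ‖St u₀ t₁ - Tt u₀ t₁‖ :=
      norm_sub_norm_le _ _
    have h4 := hdiff u₀
    rw [hu₀, mul_one] at h4
    rw [ht₁] at h3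
    linarith
  -- norm of S - T
  have hST : ‖S - T‖ ≤ 2 * D := by
    refine ContinuousLinearMap.opNorm_le_bound _ (by linarith) fun x => ?_
    have key : ‖Tt x t₁ - T x‖ ≤ D * ‖x‖ := by
      have he : Tt x t₁ - T x = (((φ t₁ : ℝ) : 𝕜) - 1) • T x := by
        have : Tt x t₁ = ((φ t₁ : ℝ) : 𝕜) • T x := rfl
        rw [this, sub_smul, one_smul]
      rw [he, norm_smul]
      have hn : ‖((φ t₁ : ℝ) : 𝕜) - 1‖ = |φ t₁ - 1| := by
        rw [show ((φ t₁ : ℝ) : 𝕜) - 1 = ((φ t₁ - 1 : ℝ) : 𝕜) by push_cast; ring,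
          RCLike.norm_ofReal]
      rw [hn, abs_of_nonpos (by linarith [(hφicc t₁).2])]
      have hTx : ‖T x‖ ≤ ‖x‖ := by
        have := T.le_opNorm x
        rwa [hT, one_mul] at this
      calc -(φ t₁ - 1) * ‖T x‖ ≤ D * ‖T x‖ :=
            mul_le_mul_of_nonneg_right (by linarith) (norm_nonneg _)
        _ ≤ D * ‖x‖ := mul_le_mul_of_nonneg_left hTx hDnn
    calc ‖(S - T) x‖ = ‖(St x t₁ - Tt x t₁) + (Tt x t₁ - T x)‖ := by
          rw [ContinuousLinearMap.sub_apply, hSapply]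
          congr 1
          abel
      _ ≤ ‖St x t₁ - Tt x t₁‖ + ‖Tt x t₁ - T x‖ := norm_add_le _ _
      _ ≤ D * ‖x‖ + D * ‖x‖ := add_le_add (hdiff x) key
      _ = 2 * D * ‖x‖ := by ring
  refine ⟨S, u₀, hSnorm, hu₀, hSu₀, by linarith, by linarith⟩
end

section
/- If a pair of Banach spaces (X,Y) has the generalized AHSP, then (X,Y) has the Bishop-Phelps-Bollobás property for operators. -/
/-- The generalized approximate hyperplane series property for a pair `(X, Y)`. -/
def GenAHSP (𝕜 X Y : Type*) [RCLike 𝕜] [NormedAddCommGroup X] [NormedSpace 𝕜 X]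
    [NormedAddCommGroup Y] [NormedSpace 𝕜 Y] : Prop :=
  ∀ ε > (0 : ℝ), ∃ η : ℝ, 0 < η ∧ η < ε ∧
    ∀ (T : ℕ → X →L[𝕜] Y) (x : ℕ → X) (α : ℕ → ℝ),
      (∀ k, ‖T k‖ = 1) → (∀ k, ‖x k‖ = 1) → (∀ k, 0 ≤ α k) → HasSum α 1 →
      ‖∑' k, ((α k : 𝕜) • T k (x k))‖ > 1 - η →
      ∃ (A : Set ℕ) (y : Y →L[𝕜] 𝕜) (S : ℕ → X →L[𝕜] Y) (z : ℕ → X),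
        ‖y‖ = 1 ∧ (∀ k, ‖S k‖ = 1) ∧ (∀ k, ‖z k‖ = 1) ∧
        (∑' k : A, α k) > 1 - ε ∧
        (∀ k ∈ A, ‖z k - x k‖ < ε ∧ ‖S k - T k‖ < ε) ∧
        (∀ k ∈ A, y (S k (z k)) = 1)

theorem bpbp_of_genAHSP (𝕜 X Y : Type*) [RCLike 𝕜]
    [NormedAddCommGroup X] [NormedSpace 𝕜 X] [CompleteSpace X]
    [NormedAddCommGroup Y] [NormedSpace 𝕜 Y] [CompleteSpace Y]
    (h : GenAHSP 𝕜 X Y) : BPBp 𝕜 X Y := by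
  intro ε hε
  set ε' : ℝ := min ε (1/2) with hε'def
  have hε'pos : 0 < ε' := lt_min hε (by norm_num)
  obtain ⟨η, hηpos, hηlt, hmain⟩ := h ε' hε'pos
  refine ⟨η, hηpos, ?_⟩
  intro T x₀ hT hx₀ hTx₀
  set α : ℕ → ℝ := fun k => if k = 0 then 1 else 0 with hα
  have hsum : HasSum α 1 := hasSum_ite_eq 0 1
  have htsum : ∑' k, ((α k : 𝕜) • (fun _ : ℕ => T) k ((fun _ : ℕ => x₀) k)) = T x₀ := by
    rw [tsum_eq_single 0 (by intro b hb; simp [hα, hb])]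
    simp [hα]
  obtain ⟨A, y, S, z, hy, hS, hz, hA, hclose, heq⟩ :=
    hmain (fun _ => T) (fun _ => x₀) α (fun _ => hT) (fun _ => hx₀)
      (fun k => by simp [hα]; split <;> norm_num) hsum
      (by rw [htsum]; linarith)
  have h0A : (0 : ℕ) ∈ A := by
    by_contra h0
    have : (∑' k : A, α k) = 0 := by
      have hall : ∀ k : A, α (k : ℕ) = (0 : ℝ) := by
        rintro ⟨k, hk⟩
        have : k ≠ 0 := fun hk0 => h0 (hk0 ▸ hk)
        simp [hα, this]
      rw [tsum_congr hall, tsum_zero]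
    rw [this] at hA
    have : ε' ≤ 1/2 := min_le_right _ _
    linarith
  refine ⟨S 0, z 0, hS 0, hz 0, ?_, ?_, ?_⟩
  · have h1 : (1 : ℝ) = ‖y (S 0 (z 0))‖ := by rw [heq 0 h0A]; simp
    have h2 : ‖y (S 0 (z 0))‖ ≤ ‖y‖ * ‖S 0 (z 0)‖ := y.le_opNorm _
    have h3 : ‖S 0 (z 0)‖ ≤ ‖S 0‖ * ‖z 0‖ := (S 0).le_opNorm _
    rw [hy, one_mul] at h2
    rw [hS 0, hz 0, one_mul] at h3
    linarith
  · exact lt_of_lt_of_le (hclose 0 h0A).1 (min_le_left _ _)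
  · exact lt_of_lt_of_le (hclose 0 h0A).2 (min_le_left _ _)
end
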